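/- Let A, B : I → ℕ be cost functions, each satisfying the bounded-shared-cost property, and let f : I → I be a surjective map with A x ≤ B (f x) for every x : I. Suppose the set of points y : I that have at least two distinct f-preimages (i.e., there exist x₁ ≠ x₂ with f x₁ = y and f x₂ = y) is infinite. Then there exists m : ℕ such that the finite set {x : I | B x ≤ m} has strictly smaller cardinality than the finite set {x : I | A x ≤ m}. -/

import Mathlib

/-!
A section `g` of the surjection `f` is injective and, because `A x ≤ B (f x)`, maps the sublevel
set `{B ≤ m}` into `{A ≤ m}`. Take `m = B y₀` for a point `y₀` with two distinct preimages: the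
preimage of `y₀` not chosen by `g` lies in `{A ≤ m}` but not in the image of `g`, so the count
strictly increases.
-/

theorem Set.ncard_lt_ncard_of_injOn_of_mem_of_notMem_image {α β : Type*} {s : Set α} {t : Set β}
    (f : α → β) (hf : Set.MapsTo f s t) (f_inj : Set.InjOn f s) {b : β} (hbt : b ∈ t)
    (hbs : b ∉ f '' s) (ht : t.Finite) : s.ncard < t.ncard := by
  rw [← f_inj.ncard_image]
  exact Set.ncard_lt_ncard ((Set.ssubset_iff_of_subset hf.image_subset).2 ⟨b, hbt, hbs⟩) ht

theorem Set.finite_setOf_le_of_finite_fibers {α : Type*} (A : α → ℕ)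
    (hA : ∀ n : ℕ, {x : α | A x = n}.Finite) (m : ℕ) : {x : α | A x ≤ m}.Finite :=
  (Set.finite_Iic m).preimage' fun n _ => hA n

theorem stmt_6_general {I : Type*} (A B : I → ℕ)
    (hA : ∀ n : ℕ, {x : I | A x = n}.Finite)
    (f : I → I) (hf : Function.Surjective f)
    (hle : ∀ x : I, A x ≤ B (f x))
    (hinf : {y : I | ∃ x₁ x₂ : I, x₁ ≠ x₂ ∧ f x₁ = y ∧ f x₂ = y}.Infinite) :
    ∃ m : ℕ, {x : I | B x ≤ m}.ncard < {x : I | A x ≤ m}.ncard := by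
  obtain ⟨y₀, x₁, x₂, hne, hx₁, hx₂⟩ := hinf.nonempty
  set g := Function.surjInv hf
  have hfg : ∀ y, f (g y) = y := Function.surjInv_eq hf
  obtain ⟨x, hx, hxg⟩ : ∃ x, f x = y₀ ∧ x ≠ g y₀ := by
    rcases eq_or_ne x₁ (g y₀) with rfl | h
    · exact ⟨x₂, hx₂, hne.symm⟩
    · exact ⟨x₁, hx₁, h⟩
  have hmaps : Set.MapsTo g {y | B y ≤ B y₀} {x | A x ≤ B y₀} := fun y hy =>
    (hle (g y)).trans (by rwa [hfg])
  have hx_notMem : x ∉ g '' {y | B y ≤ B y₀} := by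
    rintro ⟨y, -, hy⟩
    obtain rfl : y = y₀ := by rw [← hfg y, hy, hx]
    exact hxg hy.symm
  exact ⟨B y₀, Set.ncard_lt_ncard_of_injOn_of_mem_of_notMem_image g hmaps
    (Function.injective_surjInv hf).injOn (hx ▸ hle x) hx_notMem
    (Set.finite_setOf_le_of_finite_fibers A hA _)⟩

/-- If `f : I → I` is surjective with `A x ≤ B (f x)` everywhere,
both cost functions have the bounded-shared-cost property, and infinitely many
points have at least two distinct `f`-preimages, then for some `m` the finite
set `{x | B x ≤ m}` is strictly smaller than `{x | A x ≤ m}`. -/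
theorem stmt_6 {I : Type*} (A B : I → ℕ)
    (hA : ∀ n : ℕ, {x : I | A x = n}.Finite)
    (hB : ∀ n : ℕ, {x : I | B x = n}.Finite)
    (f : I → I) (hf : Function.Surjective f)
    (hle : ∀ x : I, A x ≤ B (f x))
    (hinf : {y : I | ∃ x₁ x₂ : I, x₁ ≠ x₂ ∧ f x₁ = y ∧ f x₂ = y}.Infinite) :
    ∃ m : ℕ, {x : I | B x ≤ m}.ncard < {x : I | A x ≤ m}.ncard :=
  stmt_6_general A B hA f hf hle hinf
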